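/- arXiv:2012.06750 — 2 statements merged into one kernel-verified Lean document; each statement's English description precedes it below -/
import Mathlib

section
/- (Deterministic dimension reduction.) In the deterministic contaminated regression setting, let R be a decomposable norm on ℝ^{d₁×d₂} and suppose: (i) (𝔛,ξ) satisfies MP_{R,‖·‖_♯}(f₁;f₂;f₃); (ii) 𝔛 satisfies ATP_{R,‖·‖_♯}(c₁;c₂;c₃); (iii) λ = γτ ≥ 2·[f₂ + f₁c₂/c₁] and τ ≥ 2·[f₃ + f₁c₃/c₁], with all constants positive. Then either (Δ_B,Δ_θ) ∈ 𝒞_{B*}(6,γ,Ω), or both inequalities hold: ‖[Δ_B;Δ_θ]‖_Π ≤ 2f₁/c₁² + max(c₂/λ, c₃/τ)·28f₁²/(3c₁³), and λ·R(Δ_B) + τ·‖Δ_θ‖_♯ ≤ 28f₁²/(3c₁²). -/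
open MeasureTheory Real Finset Matrix

noncomputable section

def fro {d₁ d₂ : ℕ} (V W : Matrix (Fin d₁) (Fin d₂) ℝ) : ℝ := ∑ i, ∑ j, V i j * W i j

def l2norm {n : ℕ} (u : Fin n → ℝ) : ℝ := Real.sqrt (∑ i, u i ^ 2)

/-- nonincreasing rearrangement of the absolute values of the coordinates. -/
def rearr {n : ℕ} (u : Fin n → ℝ) : Fin n → ℝ :=
  fun i => |u (Tuple.sort (fun j => -|u j|) i)|

/-- Slope weights `ω_i = log(A n / i)`, `i = 1,…,n`. -/
def slopeWeights (A : ℝ) (n : ℕ) : Fin n → ℝ := fun i => Real.log (A * n / (i.1 + 1))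

/-- Slope norm `‖u‖_♯ = Σ_i w_i u_i^♯`. -/
def slopeNorm {n : ℕ} (w : Fin n → ℝ) (u : Fin n → ℝ) : ℝ := ∑ i, w i * rearr u i

/-- tail of the Slope sum: `Σ_{i=o+1}^n ω_i u_i^♯`. -/
def slopeTail {n : ℕ} (w : Fin n → ℝ) (o : ℕ) (u : Fin n → ℝ) : ℝ :=
  ∑ i ∈ Finset.univ.filter (fun i : Fin n => o ≤ i.1), w i * rearr u i

/-- `Ω = (Σ_{i=1}^o ω_i²)^{1/2}`. -/
def OmegaConst (A : ℝ) (n o : ℕ) : ℝ :=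
  Real.sqrt (∑ i ∈ Finset.univ.filter (fun i : Fin n => i.1 < o), slopeWeights A n i ^ 2)

/-- Normalized design `𝔛^{(n)}(V) = (⟪X_i,V⟫/√n)_i`. -/
def designN {d₁ d₂ n : ℕ} (X : Fin n → Matrix (Fin d₁) (Fin d₂) ℝ)
    (V : Matrix (Fin d₁) (Fin d₂) ℝ) : Fin n → ℝ :=
  fun i => fro (X i) V / Real.sqrt n

/-- augmented seminorm `‖[V;u]‖_Π = (‖V‖_Π² + ‖u‖₂²)^{1/2}`. -/
def pairPi {d₁ d₂ n : ℕ} (Pn : Seminorm ℝ (Matrix (Fin d₁) (Fin d₂) ℝ))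
    (V : Matrix (Fin d₁) (Fin d₂) ℝ) (u : Fin n → ℝ) : ℝ :=
  Real.sqrt (Pn V ^ 2 + l2norm u ^ 2)

section AuxLemmas
open Finset
open Finset
section

lemma fin_sm_le {k n : ℕ} {f : Fin k → Fin n} (hf : StrictMono f) :
    ∀ (m : ℕ) (i : Fin k), (i : ℕ) = m → m ≤ (f i : ℕ) := by
  intro m
  induction m with
  | zero => intro i _; exact Nat.zero_le _
  | succ m ih =>
    intro i hi
    have hm : m < k := by omega
    have h1 : (⟨m, hm⟩ : Fin k) < i := by simp [Fin.lt_def, hi]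
    have h2 := hf h1
    have h3 := ih ⟨m, hm⟩ rfl
    rw [Fin.lt_def] at h2
    omega

lemma filter_lt_map {n k : ℕ} (h : k ≤ n) :
    (univ.filter (fun j : Fin n => (j:ℕ) < k)) = (univ : Finset (Fin k)).map (Fin.castLEEmb h) := by
  ext j
  simp only [mem_filter, mem_univ, true_and, mem_map]
  constructor
  · intro hj; exact ⟨⟨j, hj⟩, rfl⟩
  · rintro ⟨i, rfl⟩; exact i.isLt

lemma card_filter_lt {n k : ℕ} (h : k ≤ n) :
    (univ.filter (fun j : Fin n => (j:ℕ) < k)).card = k := by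
  rw [filter_lt_map h]; simp

lemma sum_filter_lt {n k : ℕ} (h : k ≤ n) (f : Fin n → ℝ) :
    ∑ j ∈ univ.filter (fun j : Fin n => (j:ℕ) < k), f j = ∑ i : Fin k, f (Fin.castLE h i) := by
  rw [filter_lt_map h, Finset.sum_map]
  rfl

lemma subset_head {n : ℕ} (b : Fin n → ℝ) (hb : Antitone b) (F : Finset (Fin n)) :
    ∑ j ∈ F, b j ≤ ∑ j ∈ univ.filter (fun j : Fin n => (j:ℕ) < F.card), b j := by
  have hk : F.card ≤ n := by simpa using F.card_le_univ
  rw [sum_filter_lt hk]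
  have e := F.orderIsoOfFin rfl
  have hsum : ∑ j ∈ F, b j = ∑ i : Fin F.card, b (e i) := by
    rw [← Finset.sum_coe_sort F b]
    exact (Equiv.sum_comp e.toEquiv (fun x => b x)).symm
  rw [hsum]
  apply Finset.sum_le_sum
  intro i _
  apply hb
  have hsm : StrictMono (fun i : Fin F.card => ((e i : Fin n))) := by
    intro a b' hab
    exact e.strictMono hab
  have := fin_sm_le hsm (i : ℕ) i rfl
  rw [Fin.le_def]
  simpa using this
end
open Finset

lemma abel_head {n : ℕ} :
    ∀ (o : ℕ), o ≤ n → ∀ (w c b : Fin n → ℝ), Antitone w → (∀ j, 0 ≤ w j) →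
      (∀ m : ℕ, m < o →
        ∑ j ∈ univ.filter (fun j : Fin n => (j:ℕ) < m + 1), c j
          ≤ ∑ j ∈ univ.filter (fun j : Fin n => (j:ℕ) < m + 1), b j) →
      ∑ j ∈ univ.filter (fun j : Fin n => (j:ℕ) < o), w j * c j
        ≤ ∑ j ∈ univ.filter (fun j : Fin n => (j:ℕ) < o), w j * b j := by
  intro o
  induction o with
  | zero => intro _ w c b _ _ _; simp
  | succ o ih =>
    intro ho w c b hw hw0 hcond
    have hon : o < n := ho
    set m₀ : Fin n := ⟨o, hon⟩ with hm₀
    have hnotmem : m₀ ∉ univ.filter (fun j : Fin n => (j:ℕ) < o) := by simp [hm₀]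
    have hins : univ.filter (fun j : Fin n => (j:ℕ) < o + 1)
        = insert m₀ (univ.filter (fun j : Fin n => (j:ℕ) < o)) := by
      ext j
      simp only [mem_filter, mem_univ, true_and, mem_insert]
      constructor
      · intro hj
        rcases Nat.lt_succ_iff_lt_or_eq.mp hj with h | h
        · exact Or.inr h
        · exact Or.inl (Fin.ext h)
      · rintro (rfl | hj)
        · exact Nat.lt_succ_self o
        · exact Nat.lt_succ_of_lt hj
    -- the modified weight
    set w' : Fin n → ℝ := fun j => max (w j - w m₀) 0 with hw'
    have hw'anti : Antitone w' := by
      intro a b' hab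
      exact max_le_max (sub_le_sub_right (hw hab) _) le_rfl
    have hw'0 : ∀ j, 0 ≤ w' j := fun j => le_max_right _ _
    have hw'eq : ∀ j ∈ univ.filter (fun j : Fin n => (j:ℕ) < o), w' j = w j - w m₀ := by
      intro j hj
      simp only [mem_filter, mem_univ, true_and] at hj
      have : w m₀ ≤ w j := hw (by rw [Fin.le_def]; simp [hm₀]; omega)
      simp [hw', max_eq_left, sub_nonneg.mpr this]
    have key : ∀ f : Fin n → ℝ,
        ∑ j ∈ univ.filter (fun j : Fin n => (j:ℕ) < o + 1), w j * f j
          = (∑ j ∈ univ.filter (fun j : Fin n => (j:ℕ) < o), w' j * f j)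
            + w m₀ * ∑ j ∈ univ.filter (fun j : Fin n => (j:ℕ) < o + 1), f j := by
      intro f
      rw [hins, Finset.sum_insert hnotmem, Finset.sum_insert hnotmem]
      have h1 : ∑ j ∈ univ.filter (fun j : Fin n => (j:ℕ) < o), w' j * f j
          = ∑ j ∈ univ.filter (fun j : Fin n => (j:ℕ) < o), (w j * f j - w m₀ * f j) := by
        apply Finset.sum_congr rfl
        intro j hj
        rw [hw'eq j hj]; ring
      rw [h1, Finset.sum_sub_distrib, ← Finset.mul_sum]
      ring
    rw [key c, key b]
    have hc := hcond o (Nat.lt_succ_self o)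
    have h2 : w m₀ * ∑ j ∈ univ.filter (fun j : Fin n => (j:ℕ) < o + 1), c j
        ≤ w m₀ * ∑ j ∈ univ.filter (fun j : Fin n => (j:ℕ) < o + 1), b j :=
      mul_le_mul_of_nonneg_left hc (hw0 m₀)
    have h3 := ih (le_of_lt hon) w' c b hw'anti hw'0
      (fun m hm => hcond m (Nat.lt_succ_of_lt hm))
    linarith


section
variable {n : ℕ} (u : Fin n → ℝ)

lemma rearr_nonneg (i : Fin n) : 0 ≤ rearr u i := abs_nonneg _

lemma rearr_antitone : Antitone (rearr u) := by
  intro i j hij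
  have := Tuple.monotone_sort (fun j : Fin n => -|u j|) hij
  simp only [Function.comp_apply] at this
  unfold rearr
  linarith

lemma rearr_sq_sum : ∑ i, (rearr u i)^2 = ∑ i, (u i)^2 := by
  unfold rearr
  have := Equiv.sum_comp (Tuple.sort (fun j : Fin n => -|u j|)) (fun i => (u i)^2)
  simp only [sq_abs]
  exact this

-- sum over any permutation with antitone nonneg weights, bounded by sorted pairing
lemma slope_perm_le (w : Fin n → ℝ) (hw : Antitone w) (hw0 : ∀ j, 0 ≤ w j)
    (h : Fin n → ℝ) (φ : Equiv.Perm (Fin n)) :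
    ∑ j, w j * |h (φ j)| ≤ ∑ j, w j * rearr h j := by
  set s := Tuple.sort (fun j : Fin n => -|h j|) with hs
  have habs : ∀ x : Fin n, |h x| = rearr h (s.symm x) := by
    intro x; unfold rearr; rw [← hs, Equiv.apply_symm_apply]
  set ψ : Equiv.Perm (Fin n) := φ.trans s.symm with hψ
  have huniv : (univ.filter (fun j : Fin n => (j:ℕ) < n)) = univ := by
    apply Finset.filter_true_of_mem; intro j _; exact j.isLt
  have := abel_head n le_rfl w (fun j => rearr h (ψ j)) (rearr h) hw hw0 ?_
  · rw [huniv] at this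
    calc ∑ j, w j * |h (φ j)| = ∑ j, w j * rearr h (ψ j) := by
          apply Finset.sum_congr rfl; intro j _; rw [habs]; rfl
      _ ≤ ∑ j, w j * rearr h j := this
  · intro m hm
    have hm1 : m + 1 ≤ n := hm
    set F := (univ.filter (fun j : Fin n => (j:ℕ) < m + 1)).image ψ with hF
    have hcard : F.card = m + 1 := by
      rw [hF, Finset.card_image_of_injective _ ψ.injective, card_filter_lt hm1]
    have h1 : ∑ j ∈ univ.filter (fun j : Fin n => (j:ℕ) < m + 1), rearr h (ψ j)
        = ∑ x ∈ F, rearr h x := by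
      rw [hF, Finset.sum_image (fun a _ b _ hab => ψ.injective hab)]
    rw [h1]
    have := subset_head (rearr h) (rearr_antitone h) F
    rwa [hcard] at this
end

lemma slope_sparse {n : ℕ} (w : Fin n → ℝ) (hw : Antitone w) (hw0 : ∀ j, 0 ≤ w j)
    (o : ℕ) (ho : o ≤ n) (θ u : Fin n → ℝ)
    (hθ : (univ.filter fun i => θ i ≠ 0).card ≤ o) :
    (∑ j, w j * rearr θ j)
      + ∑ j ∈ univ.filter (fun j : Fin n => o ≤ (j:ℕ)), w j * rearr u j
    ≤ (∑ j, w j * rearr (θ + u) j)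
      + ∑ j ∈ univ.filter (fun j : Fin n => (j:ℕ) < o), w j * rearr u j := by
  classical
  set σ : Equiv.Perm (Fin n) := Tuple.sort (fun j => -|u j|) with hσ
  have hrearru : ∀ x, rearr u x = |u (σ x)| := fun x => rfl
  set S : Finset (Fin n) := univ.filter (fun i => θ i ≠ 0) with hS
  set T' : Finset (Fin n) := S.image σ.symm with hT'
  have hT'card : T'.card ≤ o := le_trans Finset.card_image_le hθ
  obtain ⟨T, hT'T, hTcard⟩ := Finset.exists_superset_card_eq hT'card (by simpa using ho)
  set g : Fin n → ℝ := fun j => if j ∈ T then -1 - |θ (σ j)| else 0 with hg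
  set prm : Equiv.Perm (Fin n) := Tuple.sort g with hprm
  have hmono : Monotone (g ∘ prm) := Tuple.monotone_sort g
  have hties : ∀ i j, i < j → g (prm i) = g (prm j) → prm i < prm j :=
    ((Tuple.eq_sort_iff (f := g)).mp rfl).2
  have hgneg : ∀ x, x ∈ T ↔ g x < 0 := by
    intro x
    constructor
    · intro hx; simp only [hg, if_pos hx]
      have := abs_nonneg (θ (σ x)); linarith
    · intro hx
      by_contra hxT
      simp only [hg, if_neg hxT] at hx; linarith
  -- membership characterization
  have hJ : (univ.filter (fun j : Fin n => prm j ∈ T)) = T.image prm.symm := by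
    ext j
    simp only [mem_filter, mem_univ, true_and, Finset.mem_image]
    constructor
    · intro hj; exact ⟨prm j, hj, Equiv.symm_apply_apply _ _⟩
    · rintro ⟨t, ht, rfl⟩; simpa using ht
  have hJcard : (univ.filter (fun j : Fin n => prm j ∈ T)).card = o := by
    rw [hJ, Finset.card_image_of_injective _ prm.symm.injective, hTcard]
  have hlow : ∀ (j j' : Fin n), j' ≤ j → prm j ∈ T → prm j' ∈ T := by
    intro j j' hj' hjT
    rw [hgneg]
    have h1 : g (prm j') ≤ g (prm j) := hmono hj'
    have h2 : g (prm j) < 0 := (hgneg _).mp hjT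
    linarith
  have hmemT : ∀ j : Fin n, prm j ∈ T ↔ (j:ℕ) < o := by
    have dir1 : ∀ j : Fin n, prm j ∈ T → (j:ℕ) < o := by
      intro j hjT
      by_contra hjo
      push_neg at hjo
      have hsub : univ.filter (fun x : Fin n => (x:ℕ) < (j:ℕ) + 1)
          ⊆ univ.filter (fun j : Fin n => prm j ∈ T) := by
        intro x hx
        simp only [mem_filter, mem_univ, true_and] at hx ⊢
        exact hlow j x (by rw [Fin.le_def]; omega) hjT
      have hcard := Finset.card_le_card hsub
      rw [card_filter_lt (by omega : (j:ℕ) + 1 ≤ n), hJcard] at hcard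
      omega
    intro j
    constructor
    · exact dir1 j
    · intro hj
      have hsub : (univ.filter (fun j : Fin n => prm j ∈ T))
          ⊆ univ.filter (fun x : Fin n => (x:ℕ) < o) := by
        intro x hx
        simp only [mem_filter, mem_univ, true_and] at hx ⊢
        exact dir1 x hx
      have heq := Finset.eq_of_subset_of_card_le hsub
        (by rw [card_filter_lt ho, hJcard])
      have : j ∈ univ.filter (fun x : Fin n => (x:ℕ) < o) := by
        simp only [mem_filter, mem_univ, true_and]; exact hj
      rw [← heq] at this
      simpa using this
  -- prm j ≤ j on the tail block
  have hcfl : ∀ a : Fin n, (univ.filter (fun x : Fin n => x < a)).card = (a:ℕ) := by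
    intro a
    have : (univ.filter (fun x : Fin n => x < a)) = univ.filter (fun x : Fin n => (x:ℕ) < (a:ℕ)) := by
      exact Finset.filter_congr fun x _ => Fin.lt_def
    rw [this, card_filter_lt (le_of_lt a.isLt)]
  have hprmle : ∀ j : Fin n, o ≤ (j:ℕ) → ((prm j : Fin n) : ℕ) ≤ (j:ℕ) := by
    intro j hoj
    have hjT : prm j ∉ T := by rw [hmemT]; omega
    have hsplit : univ.filter (fun x : Fin n => x < prm j)
        = (univ.filter (fun x : Fin n => x < prm j ∧ x ∈ T))
          ∪ (univ.filter (fun x : Fin n => x < prm j ∧ x ∉ T)) := by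
      ext x
      simp only [mem_filter, mem_univ, true_and, Finset.mem_union]
      by_cases hx : x ∈ T <;> simp [hx]
    have hA : (univ.filter (fun x : Fin n => x < prm j ∧ x ∈ T)).card ≤ o := by
      rw [← hTcard]
      apply Finset.card_le_card
      intro x hx
      simp only [mem_filter, mem_univ, true_and] at hx
      exact hx.2
    have hB : (univ.filter (fun x : Fin n => x < prm j ∧ x ∉ T)).card ≤ (j:ℕ) - o := by
      have hinj : ∀ x ∈ univ.filter (fun x : Fin n => x < prm j ∧ x ∉ T),
          prm.symm x ∈ univ.filter (fun j' : Fin n => o ≤ (j':ℕ) ∧ (j':ℕ) < (j:ℕ)) := by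
        intro x hx
        simp only [mem_filter, mem_univ, true_and] at hx ⊢
        obtain ⟨hxlt, hxT⟩ := hx
        have hx1 : prm (prm.symm x) = x := prm.apply_symm_apply x
        have ho' : o ≤ ((prm.symm x : Fin n) : ℕ) := by
          by_contra hco
          push_neg at hco
          have := (hmemT (prm.symm x)).mpr hco
          rw [hx1] at this
          exact hxT this
        refine ⟨ho', ?_⟩
        have hne : prm.symm x ≠ j := by
          intro hh; rw [hh] at hx1; rw [hx1] at hxlt; exact lt_irrefl _ hxlt
        have hnotlt : ¬ (j < prm.symm x) := by
          intro hh
          have := hties j (prm.symm x) hh (by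
            rw [hx1]
            simp only [hg, if_neg hjT, if_neg hxT])
          rw [hx1] at this
          exact absurd hxlt (asymm this)
        have : prm.symm x < j := by
          rcases lt_trichotomy (prm.symm x) j with h | h | h
          · exact h
          · exact absurd h hne
          · exact absurd h hnotlt
        exact this
      have hcardK : (univ.filter (fun j' : Fin n => o ≤ (j':ℕ) ∧ (j':ℕ) < (j:ℕ))).card ≤ (j:ℕ) - o := by
        have hsub2 : (univ.filter (fun j' : Fin n => o ≤ (j':ℕ) ∧ (j':ℕ) < (j:ℕ)))
            ⊆ (univ.filter (fun x : Fin n => (x:ℕ) < (j:ℕ))) \ (univ.filter (fun x : Fin n => (x:ℕ) < o)) := by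
          intro x hx
          simp only [mem_filter, mem_univ, true_and, Finset.mem_sdiff] at hx ⊢
          omega
        have hBA : (univ.filter (fun x : Fin n => (x:ℕ) < o))
            ⊆ (univ.filter (fun x : Fin n => (x:ℕ) < (j:ℕ))) := by
          intro x hx
          simp only [mem_filter, mem_univ, true_and] at hx ⊢
          omega
        have := Finset.card_le_card hsub2
        rwa [Finset.card_sdiff_of_subset hBA, card_filter_lt (le_of_lt j.isLt), card_filter_lt ho] at this
      calc (univ.filter (fun x : Fin n => x < prm j ∧ x ∉ T)).card
          ≤ (univ.filter (fun j' : Fin n => o ≤ (j':ℕ) ∧ (j':ℕ) < (j:ℕ))).card :=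
            Finset.card_le_card_of_injOn _ hinj
              (fun a _ b _ hab => prm.symm.injective hab)
        _ ≤ (j:ℕ) - o := hcardK
    have := hcfl (prm j)
    have hun := Finset.card_union_le
      (univ.filter (fun x : Fin n => x < prm j ∧ x ∈ T))
      (univ.filter (fun x : Fin n => x < prm j ∧ x ∉ T))
    rw [← hsplit, this] at hun
    omega
  -- sorted θ facts
  set sθ : Equiv.Perm (Fin n) := Tuple.sort (fun i => -|θ i|) with hsθ
  have hrearrθ : ∀ x, rearr θ x = |θ (sθ x)| := fun x => rfl
  have hzero : ∀ j : Fin n, o ≤ (j:ℕ) → rearr θ j = 0 := by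
    intro j hoj
    by_contra h0
    have hpos : 0 < rearr θ j := lt_of_le_of_ne (rearr_nonneg θ j) (Ne.symm h0)
    have hinj : ∀ i ∈ univ.filter (fun i : Fin n => (i:ℕ) < (j:ℕ) + 1), sθ i ∈ S := by
      intro i hi
      simp only [mem_filter, mem_univ, true_and] at hi
      have h1 : rearr θ j ≤ rearr θ i := rearr_antitone θ (by rw [Fin.le_def]; omega)
      have h2 : 0 < |θ (sθ i)| := by rw [← hrearrθ]; linarith
      simp only [hS, mem_filter, mem_univ, true_and]
      intro hc; rw [hc] at h2; simp at h2
    have hcard := Finset.card_le_card_of_injOn _ hinj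
      (fun a _ b _ hab => sθ.injective hab)
    rw [card_filter_lt (by omega : (j:ℕ) + 1 ≤ n)] at hcard
    omega
  -- head block: d_j dominates rearr θ j
  have hdanti : ∀ j j' : Fin n, j ≤ j' → (j':ℕ) < o → |θ (σ (prm j'))| ≤ |θ (σ (prm j))| := by
    intro j j' hjj' hj'o
    have hj'T : prm j' ∈ T := (hmemT j').mpr hj'o
    have hjT : prm j ∈ T := (hmemT j).mpr (by rw [Fin.le_def] at hjj'; omega)
    have := hmono hjj'
    simp only [Function.comp_apply, hg, if_pos hjT, if_pos hj'T] at this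
    linarith
  have hd : ∀ j : Fin n, (j:ℕ) < o → rearr θ j ≤ |θ (σ (prm j))| := by
    intro j hjo
    by_contra hcon
    push_neg at hcon
    have hv : 0 < rearr θ j := lt_of_le_of_lt (abs_nonneg _) hcon
    have hinj : ∀ i ∈ univ.filter (fun i : Fin n => (i:ℕ) < (j:ℕ) + 1),
        prm.symm (σ.symm (sθ i)) ∈ univ.filter (fun x : Fin n => (x:ℕ) < (j:ℕ)) := by
      intro i hi
      simp only [mem_filter, mem_univ, true_and] at hi ⊢
      have h1 : rearr θ j ≤ rearr θ i := rearr_antitone θ (by rw [Fin.le_def]; omega)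
      have h2 : 0 < |θ (sθ i)| := by rw [← hrearrθ]; linarith
      have hmemS : sθ i ∈ S := by
        simp only [hS, mem_filter, mem_univ, true_and]
        intro hc; rw [hc] at h2; simp at h2
      have hmemT' : σ.symm (sθ i) ∈ T := hT'T (by
        rw [hT']; exact Finset.mem_image_of_mem _ hmemS)
      set j' := prm.symm (σ.symm (sθ i)) with hj'
      have hprmj' : prm j' = σ.symm (sθ i) := prm.apply_symm_apply _
      have hj'o : (j':ℕ) < o := by
        rw [← hmemT, hprmj']; exact hmemT'
      have hdj' : |θ (σ (prm j'))| = |θ (sθ i)| := by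
        rw [hprmj', Equiv.apply_symm_apply]
      have hgt : |θ (σ (prm j))| < |θ (σ (prm j'))| := by
        rw [hdj', ← hrearrθ]; linarith
      by_contra hge
      push_neg at hge
      have : |θ (σ (prm j'))| ≤ |θ (σ (prm j))| :=
        hdanti j j' (by rw [Fin.le_def]; omega) hj'o
      linarith
    have hcard := Finset.card_le_card_of_injOn _ hinj
      (fun a _ b _ hab => sθ.injective (σ.symm.injective (prm.symm.injective hab)))
    rw [card_filter_lt (by omega : (j:ℕ) + 1 ≤ n),
        card_filter_lt (by omega : (j:ℕ) ≤ n)] at hcard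
    omega
  -- tail block identity
  have htail0 : ∀ j : Fin n, o ≤ (j:ℕ) → θ (σ (prm j)) = 0 := by
    intro j hoj
    have hjT : prm j ∉ T := by rw [hmemT]; omega
    by_contra hne
    have : σ (prm j) ∈ S := by simp [hS, hne]
    have : σ.symm (σ (prm j)) ∈ T' := by rw [hT']; exact Finset.mem_image_of_mem _ this
    rw [Equiv.symm_apply_apply] at this
    exact hjT (hT'T this)
  -- assembly
  have hFt : (univ.filter (fun j : Fin n => o ≤ (j:ℕ)))
      = univ.filter (fun j : Fin n => ¬ (j:ℕ) < o) :=
    Finset.filter_congr fun j _ => by simp [not_lt]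
  rw [hFt]
  set Afun : Fin n → ℝ := fun j => |(θ + u) (σ (prm j))| with hAfun
  set Bfun : Fin n → ℝ := fun j => rearr u (prm j) with hBfun
  -- 1: θ sum reduces to head
  have h1 : (∑ j, w j * rearr θ j)
      = ∑ j ∈ univ.filter (fun j : Fin n => (j:ℕ) < o), w j * rearr θ j := by
    rw [← Finset.sum_filter_add_sum_filter_not univ (fun j : Fin n => (j:ℕ) < o)
      (fun j => w j * rearr θ j)]
    have hz : ∑ j ∈ univ.filter (fun j : Fin n => ¬ (j:ℕ) < o), w j * rearr θ j = 0 :=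
      Finset.sum_eq_zero (fun j hj => by
        simp only [mem_filter, mem_univ, true_and, not_lt] at hj
        rw [hzero j hj]; ring)
    rw [hz, add_zero]
  -- 2: head domination
  have h2 : ∑ j ∈ univ.filter (fun j : Fin n => (j:ℕ) < o), w j * rearr θ j
      ≤ ∑ j ∈ univ.filter (fun j : Fin n => (j:ℕ) < o), w j * (Afun j + Bfun j) := by
    apply Finset.sum_le_sum
    intro j hj
    simp only [mem_filter, mem_univ, true_and] at hj
    apply mul_le_mul_of_nonneg_left _ (hw0 j)
    have hda := hd j hj
    have habs : |θ (σ (prm j))| ≤ |(θ + u) (σ (prm j))| + |u (σ (prm j))| := by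
      have hrw : θ (σ (prm j)) = (θ + u) (σ (prm j)) + (-(u (σ (prm j)))) := by
        simp [Pi.add_apply]
      rw [hrw]
      calc |(θ + u) (σ (prm j)) + (-(u (σ (prm j))))|
          ≤ |(θ + u) (σ (prm j))| + |(-(u (σ (prm j))))| := abs_add_le _ _
        _ = |(θ + u) (σ (prm j))| + |u (σ (prm j))| := by rw [abs_neg]
    have : rearr u (prm j) = |u (σ (prm j))| := hrearru (prm j)
    simp only [hAfun, hBfun]
    rw [this]
    linarith
  have h2' : ∑ j ∈ univ.filter (fun j : Fin n => (j:ℕ) < o), w j * (Afun j + Bfun j)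
      = (∑ j ∈ univ.filter (fun j : Fin n => (j:ℕ) < o), w j * Afun j)
        + ∑ j ∈ univ.filter (fun j : Fin n => (j:ℕ) < o), w j * Bfun j := by
    rw [← Finset.sum_add_distrib]
    exact Finset.sum_congr rfl fun j _ => by ring
  -- 4: tail domination
  have h4 : ∑ j ∈ univ.filter (fun j : Fin n => ¬ (j:ℕ) < o), w j * rearr u j
      ≤ ∑ j ∈ univ.filter (fun j : Fin n => ¬ (j:ℕ) < o), w j * Afun j := by
    apply Finset.sum_le_sum
    intro j hj
    simp only [mem_filter, mem_univ, true_and, not_lt] at hj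
    apply mul_le_mul_of_nonneg_left _ (hw0 j)
    have h4a : rearr u j ≤ rearr u (prm j) :=
      rearr_antitone u (by rw [Fin.le_def]; exact hprmle j hj)
    have h4b : Afun j = rearr u (prm j) := by
      simp only [hAfun]
      rw [hrearru]
      simp [Pi.add_apply, htail0 j hj]
    rw [h4b]
    exact h4a
  -- 5+6: permuted sum bounded by slope norm
  have h56 : (∑ j ∈ univ.filter (fun j : Fin n => (j:ℕ) < o), w j * Afun j)
      + ∑ j ∈ univ.filter (fun j : Fin n => ¬ (j:ℕ) < o), w j * Afun j
      ≤ ∑ j, w j * rearr (θ + u) j := by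
    rw [Finset.sum_filter_add_sum_filter_not univ (fun j : Fin n => (j:ℕ) < o)
      (fun j => w j * Afun j)]
    have := slope_perm_le w hw hw0 (θ + u) (prm.trans σ)
    simpa only [Equiv.trans_apply] using this
  -- 7: head of permuted u bounded by head of u
  have h7 : ∑ j ∈ univ.filter (fun j : Fin n => (j:ℕ) < o), w j * Bfun j
      ≤ ∑ j ∈ univ.filter (fun j : Fin n => (j:ℕ) < o), w j * rearr u j := by
    apply abel_head o ho w Bfun (rearr u) hw hw0
    intro m hm
    have hm1 : m + 1 ≤ n := by omega
    have he : ∑ j ∈ univ.filter (fun j : Fin n => (j:ℕ) < m + 1), rearr u (prm j)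
        = ∑ x ∈ (univ.filter (fun j : Fin n => (j:ℕ) < m + 1)).image prm, rearr u x :=
      (Finset.sum_image fun a _ b _ hab => prm.injective hab).symm
    simp only [hBfun]
    rw [he]
    have hcard : ((univ.filter (fun j : Fin n => (j:ℕ) < m + 1)).image prm).card = m + 1 := by
      rw [Finset.card_image_of_injective _ prm.injective, card_filter_lt hm1]
    have := subset_head (rearr u) (rearr_antitone u)
      ((univ.filter (fun j : Fin n => (j:ℕ) < m + 1)).image prm)
    rwa [hcard] at this
  linarith

lemma quad_bound {q bb κ : ℝ} (hq0 : 0 ≤ q) (hbb0 : 0 ≤ bb) (hκ : 0 < κ)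
    (h : q^2/2 + bb/4 ≤ κ*q) : q ≤ 2*κ ∧ bb ≤ 2*κ^2 := by
  constructor
  · by_contra hc
    push_neg at hc
    have hqpos : 0 < q := lt_trans (by linarith) hc
    nlinarith [mul_lt_mul_of_pos_right hc hqpos]
  · linarith [sq_nonneg (q - κ)]

end AuxLemmas

set_option maxHeartbeats 1000000 in
/-- **Deterministic dimension reduction** (Lemma `lemma:dim:reduction`). -/
theorem dimension_reduction {d₁ d₂ n : ℕ} (hn : 0 < n)
    (X : Fin n → Matrix (Fin d₁) (Fin d₂) ℝ) (ξ : Fin n → ℝ)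
    (Pn : Seminorm ℝ (Matrix (Fin d₁) (Fin d₂) ℝ))
    (A : ℝ) (hA : 2 ≤ A) (o : ℕ) (ho : o ≤ n)
    (Bstar : Matrix (Fin d₁) (Fin d₂) ℝ) (θstar : Fin n → ℝ)
    (hθsparse : (Finset.univ.filter fun i => θstar i ≠ 0).card ≤ o)
    -- R a decomposable norm with decomposition projections P⊥_B
    (R : Seminorm ℝ (Matrix (Fin d₁) (Fin d₂) ℝ)) (hRdef : ∀ V, R V = 0 → V = 0)
    (Pp : Matrix (Fin d₁) (Fin d₂) ℝ →
      Matrix (Fin d₁) (Fin d₂) ℝ →ₗ[ℝ] Matrix (Fin d₁) (Fin d₂) ℝ)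
    (hP0 : ∀ B, Pp B B = 0)
    (hPorth : ∀ B V, fro (V - Pp B V) (Pp B V) = 0)
    (hPdecomp : ∀ B V, R V = R (V - Pp B V) + R (Pp B V))
    -- constants
    (f₁ f₂ f₃ c₁ c₂ c₃ lam tau : ℝ)
    (hf₁ : 0 < f₁) (hf₂ : 0 < f₂) (hf₃ : 0 < f₃)
    (hc₁ : 0 < c₁) (hc₂ : 0 < c₂) (hc₃ : 0 < c₃) (hlam : 0 < lam) (htau : 0 < tau)
    -- (i) MP_{R,‖·‖_♯}(f₁;f₂;f₃)
    (hMP : ∀ (V : Matrix (Fin d₁) (Fin d₂) ℝ) (u : Fin n → ℝ),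
      |∑ i, (ξ i / Real.sqrt n) * (designN X V i + u i)|
        ≤ f₁ * pairPi Pn V u + f₂ * R V + f₃ * slopeNorm (slopeWeights A n) u)
    -- (ii) ATP_{R,‖·‖_♯}(c₁;c₂;c₃)
    (hATP : ∀ (V : Matrix (Fin d₁) (Fin d₂) ℝ) (u : Fin n → ℝ),
      c₁ * pairPi Pn V u - c₂ * R V - c₃ * slopeNorm (slopeWeights A n) u
        ≤ l2norm (fun i => designN X V i + u i))
    -- (iii) tuning
    (hlam2 : 2 * (f₂ + f₁ * c₂ / c₁) ≤ lam)
    (htau2 : 2 * (f₃ + f₁ * c₃ / c₁) ≤ tau)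
    -- data and estimator
    (y : Fin n → ℝ)
    (hy : y = fun i => fro (X i) Bstar + Real.sqrt n * θstar i + ξ i)
    (Bhat : Matrix (Fin d₁) (Fin d₂) ℝ) (θhat : Fin n → ℝ)
    (hmin : ∀ (B : Matrix (Fin d₁) (Fin d₂) ℝ) (θ : Fin n → ℝ),
      (1 / (2 * (n : ℝ))) * ∑ i, (y i - fro (X i) Bhat - Real.sqrt n * θhat i) ^ 2
          + lam * R Bhat + tau * slopeNorm (slopeWeights A n) θhat
        ≤ (1 / (2 * (n : ℝ))) * ∑ i, (y i - fro (X i) B - Real.sqrt n * θ i) ^ 2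
          + lam * R B + tau * slopeNorm (slopeWeights A n) θ) :
    -- conclusion: either (Δ_B,Δ_θ) ∈ 𝒞_{B*}(6, γ, Ω), with γ = λ/τ, or both bounds hold
    ((lam / tau) * R (Pp Bstar (Bhat - Bstar))
        + slopeTail (slopeWeights A n) o (θhat - θstar)
      ≤ 6 * ((lam / tau) * R ((Bhat - Bstar) - Pp Bstar (Bhat - Bstar))
        + OmegaConst A n o * l2norm (θhat - θstar))) ∨
    (pairPi Pn (Bhat - Bstar) (θhat - θstar)
        ≤ 2 * f₁ / c₁ ^ 2 + max (c₂ / lam) (c₃ / tau) * (28 * f₁ ^ 2 / (3 * c₁ ^ 3)) ∧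
      lam * R (Bhat - Bstar) + tau * slopeNorm (slopeWeights A n) (θhat - θstar)
        ≤ 28 * f₁ ^ 2 / (3 * c₁ ^ 2)) := by
  classical
  have hn' : (0:ℝ) < (n:ℝ) := by exact_mod_cast hn
  have hA0 : (0:ℝ) < A := lt_of_lt_of_le two_pos hA
  -- weights
  set w : Fin n → ℝ := slopeWeights A n with hwdef
  have hw0 : ∀ j : Fin n, 0 ≤ w j := by
    intro j
    rw [hwdef]
    unfold slopeWeights
    apply Real.log_nonneg
    rw [le_div_iff₀ (by positivity : (0:ℝ) < ((j:ℕ):ℝ) + 1)]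
    have h1 : ((j:ℕ):ℝ) + 1 ≤ (n:ℝ) := by
      have := j.isLt
      exact_mod_cast Nat.succ_le_of_lt this
    nlinarith
  have hwanti : Antitone w := by
    intro i j hij
    rw [hwdef]
    unfold slopeWeights
    have hij' : ((i:ℕ):ℝ) + 1 ≤ ((j:ℕ):ℝ) + 1 := by
      rw [Fin.le_def] at hij
      have : ((i:ℕ):ℝ) ≤ ((j:ℕ):ℝ) := by exact_mod_cast hij
      linarith
    apply (Real.log_le_log_iff (by positivity) (by positivity)).mpr
    apply div_le_div_of_nonneg_left (by positivity) (by positivity) hij'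
  -- differences
  set ΔB := Bhat - Bstar with hΔB
  set Δθ : Fin n → ℝ := θhat - θstar with hΔθ
  set v : Fin n → ℝ := fun i => designN X ΔB i + Δθ i with hv
  have hvi : ∀ i, designN X ΔB i + Δθ i = v i := fun i => rfl
  set sn := Real.sqrt (n:ℝ) with hsn
  have hsnpos : 0 < sn := Real.sqrt_pos.mpr hn'
  have hsq : sn^2 = (n:ℝ) := Real.sq_sqrt (le_of_lt hn')
  set Q := ∑ i, v i ^ 2 with hQ
  have hQ0 : 0 ≤ Q := Finset.sum_nonneg fun i _ => sq_nonneg _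
  set q := Real.sqrt Q with hq
  have hqsq : q ^ 2 = Q := Real.sq_sqrt hQ0
  have hq0 : 0 ≤ q := Real.sqrt_nonneg _
  have hlv : l2norm v = q := by rw [hq, hQ]; rfl
  -- fro is linear
  have fro_sub : ∀ (M B C : Matrix (Fin d₁) (Fin d₂) ℝ), fro M (B - C) = fro M B - fro M C := by
    intro M B C
    simp [fro, Matrix.sub_apply, mul_sub, Finset.sum_sub_distrib]
  have hdes : ∀ i, sn * designN X ΔB i = fro (X i) ΔB := by
    intro i
    show sn * (fro (X i) ΔB / Real.sqrt (n:ℝ)) = fro (X i) ΔB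
    rw [← hsn]
    field_simp
  -- residuals
  have hres1 : ∀ i, y i - fro (X i) Bhat - Real.sqrt (n:ℝ) * θhat i = ξ i - sn * v i := by
    intro i
    have e1 : sn * v i = (fro (X i) Bhat - fro (X i) Bstar) + sn * (θhat i - θstar i) := by
      rw [hv]
      simp only
      rw [mul_add, hdes i, hΔB, fro_sub]
      simp [hΔθ, Pi.sub_apply]
    simp only [hy]
    rw [← hsn, e1]
    ring
  have hres2 : ∀ i, y i - fro (X i) Bstar - Real.sqrt (n:ℝ) * θstar i = ξ i := by
    intro i
    simp only [hy]
    ring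
  -- basic inequality
  have hbasic : Q / 2 ≤ (∑ i, (ξ i / Real.sqrt (n:ℝ)) * v i)
      + lam * ((R Bstar : ℝ) - R Bhat)
      + tau * (slopeNorm w θstar - slopeNorm w θhat) := by
    have hm := hmin Bstar θstar
    have hrw1 : ∑ i, (y i - fro (X i) Bhat - Real.sqrt (n:ℝ) * θhat i)^2
        = ∑ i, (ξ i - sn * v i)^2 :=
      Finset.sum_congr rfl fun i _ => by rw [hres1 i]
    have hrw2 : ∑ i, (y i - fro (X i) Bstar - Real.sqrt (n:ℝ) * θstar i)^2
        = ∑ i, (ξ i)^2 :=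
      Finset.sum_congr rfl fun i _ => by rw [hres2 i]
    rw [hrw1, hrw2] at hm
    have hexp : ∑ i, (ξ i - sn * v i)^2
        = (∑ i, (ξ i)^2) - 2 * sn * (∑ i, ξ i * v i) + sn^2 * Q := by
      rw [hQ, Finset.mul_sum, Finset.mul_sum, ← Finset.sum_sub_distrib, ← Finset.sum_add_distrib]
      exact Finset.sum_congr rfl fun i _ => by ring
    rw [hexp] at hm
    have hEeq : ∑ i, (ξ i / Real.sqrt (n:ℝ)) * v i = (∑ i, ξ i * v i) / sn := by
      rw [Finset.sum_div]
      apply Finset.sum_congr rfl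
      intro i _
      rw [← hsn]
      ring
    rw [hEeq]
    have hkey : (1 / (2 * (n:ℝ))) * ((∑ i, (ξ i)^2) - 2 * sn * (∑ i, ξ i * v i) + sn^2 * Q)
        = (1 / (2 * (n:ℝ))) * (∑ i, (ξ i)^2) - (∑ i, ξ i * v i) / sn + Q / 2 := by
      rw [← hsq]
      have hsn0 : sn ≠ 0 := ne_of_gt hsnpos
      field_simp
    rw [hkey] at hm
    linarith
  -- MP bound
  have hMPv : (∑ i, (ξ i / Real.sqrt (n:ℝ)) * v i)
      ≤ f₁ * pairPi Pn ΔB Δθ + f₂ * R ΔB + f₃ * slopeNorm w Δθ := by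
    have := le_trans (le_abs_self _) (hMP ΔB Δθ)
    simpa only [hvi] using this
  -- ATP bound
  have hATPv : c₁ * pairPi Pn ΔB Δθ - c₂ * R ΔB - c₃ * slopeNorm w Δθ ≤ q := by
    have h := hATP ΔB Δθ
    have he : (fun i => designN X ΔB i + Δθ i) = v := funext hvi
    rw [he, hlv] at h
    exact h
  -- decomposability
  set Rp := (R (Pp Bstar ΔB) : ℝ) with hRp
  set Rm := (R (ΔB - Pp Bstar ΔB) : ℝ) with hRm
  have hRdec : (R ΔB : ℝ) = Rm + Rp := by
    rw [hRm, hRp]; exact hPdecomp Bstar ΔB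
  have hdec : (R Bstar : ℝ) - R Bhat ≤ Rm - Rp := by
    have h2 : Pp Bstar ΔB = Pp Bstar Bhat := by
      rw [hΔB, map_sub, hP0 Bstar, sub_zero]
    have h1 : (R Bhat : ℝ) = R (Bhat - Pp Bstar ΔB) + Rp := by
      rw [hRp, h2]; exact hPdecomp Bstar Bhat
    have heq : Bstar = (Bhat - Pp Bstar ΔB) - (ΔB - Pp Bstar ΔB) := by
      rw [hΔB]; abel
    have h3 : (R Bstar : ℝ) ≤ R (Bhat - Pp Bstar ΔB) + Rm := by
      calc (R Bstar : ℝ) = R ((Bhat - Pp Bstar ΔB) - (ΔB - Pp Bstar ΔB)) := by rw [← heq]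
        _ ≤ R (Bhat - Pp Bstar ΔB) + R (ΔB - Pp Bstar ΔB) := map_sub_le_add R _ _
        _ = R (Bhat - Pp Bstar ΔB) + Rm := by rw [hRm]
    linarith
  -- slope decomposability
  set hd := ∑ j ∈ Finset.univ.filter (fun j : Fin n => (j:ℕ) < o), w j * rearr Δθ j with hhd
  set tl := slopeTail w o Δθ with htl
  have hslope : slopeNorm w θstar - slopeNorm w θhat ≤ hd - tl := by
    have hsum := slope_sparse w hwanti hw0 o ho θstar Δθ hθsparse
    have hθh : θstar + Δθ = θhat := by rw [hΔθ]; abel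
    rw [hθh] at hsum
    have e1 : slopeNorm w θstar = ∑ j, w j * rearr θstar j := rfl
    have e2 : slopeNorm w θhat = ∑ j, w j * rearr θhat j := rfl
    have e3 : tl = ∑ j ∈ Finset.univ.filter (fun j : Fin n => o ≤ (j:ℕ)), w j * rearr Δθ j := rfl
    rw [e1, e2, e3, hhd]
    linarith
  have hSl : slopeNorm w Δθ = hd + tl := by
    have e0 : slopeNorm w Δθ = ∑ j, w j * rearr Δθ j := rfl
    have etl : tl = ∑ j ∈ Finset.univ.filter (fun j : Fin n => ¬ (j:ℕ) < o), w j * rearr Δθ j := by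
      rw [htl]
      unfold slopeTail
      exact Finset.sum_congr (Finset.filter_congr fun j _ => by simp [not_lt]) (fun _ _ => rfl)
    rw [e0, etl, hhd]
    exact (Finset.sum_filter_add_sum_filter_not Finset.univ _ _).symm
  -- head vs Omega
  set Ωc := OmegaConst A n o with hΩc
  set L := l2norm Δθ with hL
  have hΩc0 : 0 ≤ Ωc := Real.sqrt_nonneg _
  have hL0 : 0 ≤ L := Real.sqrt_nonneg _
  have hhd0 : 0 ≤ hd := Finset.sum_nonneg fun j _ => mul_nonneg (hw0 j) (rearr_nonneg _ _)
  have htl0 : 0 ≤ tl := Finset.sum_nonneg fun j _ => mul_nonneg (hw0 j) (rearr_nonneg _ _)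
  have hheadL : hd ≤ Ωc * L := by
    have hcs := Finset.sum_mul_sq_le_sq_mul_sq
      (Finset.univ.filter (fun j : Fin n => (j:ℕ) < o)) w (rearr Δθ)
    have h1 : ∑ j ∈ Finset.univ.filter (fun j : Fin n => (j:ℕ) < o), (rearr Δθ j)^2
        ≤ ∑ j, (Δθ j)^2 := by
      rw [← rearr_sq_sum Δθ]
      apply Finset.sum_le_sum_of_subset_of_nonneg (Finset.filter_subset _ _)
      intros
      positivity
    have h2 : hd^2 ≤ (∑ j ∈ Finset.univ.filter (fun j : Fin n => (j:ℕ) < o), (w j)^2)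
        * (∑ j, (Δθ j)^2) := by
      rw [hhd]
      refine le_trans hcs ?_
      apply mul_le_mul_of_nonneg_left h1 (Finset.sum_nonneg fun j _ => sq_nonneg _)
    calc hd ≤ Real.sqrt (hd^2) := by rw [Real.sqrt_sq hhd0]
      _ ≤ Real.sqrt ((∑ j ∈ Finset.univ.filter (fun j : Fin n => (j:ℕ) < o), (w j)^2)
          * (∑ j, (Δθ j)^2)) := Real.sqrt_le_sqrt h2
      _ = Ωc * L := by
          rw [Real.sqrt_mul (Finset.sum_nonneg fun j _ => sq_nonneg _)]
          rw [hΩc, hL]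
          unfold OmegaConst l2norm
          rw [hwdef]
  -- nonnegativity of norms
  have hRΔ0 : (0:ℝ) ≤ R ΔB := apply_nonneg R ΔB
  have hRp0 : (0:ℝ) ≤ Rp := apply_nonneg R _
  have hRm0 : (0:ℝ) ≤ Rm := apply_nonneg R _
  have hSl0 : 0 ≤ slopeNorm w Δθ := by rw [hSl]; linarith
  -- combining
  set P := pairPi Pn ΔB Δθ with hP
  have hPle : P ≤ (q + c₂ * R ΔB + c₃ * slopeNorm w Δθ) / c₁ := by
    rw [le_div_iff₀ hc₁]
    have : c₁ * P = c₁ * pairPi Pn ΔB Δθ := rfl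
    linarith [hATPv]
  have hf1P : f₁ * P ≤ f₁/c₁*q + f₁*c₂/c₁*(R ΔB) + f₁*c₃/c₁*(slopeNorm w Δθ) := by
    have h := mul_le_mul_of_nonneg_left hPle hf₁.le
    calc f₁ * P ≤ f₁ * ((q + c₂ * R ΔB + c₃ * slopeNorm w Δθ) / c₁) := h
      _ = f₁/c₁*q + f₁*c₂/c₁*(R ΔB) + f₁*c₃/c₁*(slopeNorm w Δθ) := by
          field_simp
  have m3 : lam * ((R Bstar : ℝ) - R Bhat) ≤ lam * (Rm - Rp) :=
    mul_le_mul_of_nonneg_left hdec hlam.le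
  have m4 : tau * (slopeNorm w θstar - slopeNorm w θhat) ≤ tau * (hd - tl) :=
    mul_le_mul_of_nonneg_left hslope htau.le
  have combo : Q/2 ≤ f₁/c₁*q + (f₂ + f₁*c₂/c₁)*(R ΔB) + (f₃ + f₁*c₃/c₁)*(slopeNorm w Δθ)
      + lam*(Rm - Rp) + tau*(hd - tl) := by linarith [hbasic, hMPv, hf1P, m3, m4]
  have absorb1 : f₂*(R ΔB) + f₁*c₂/c₁*(R ΔB) ≤ lam/2*Rm + lam/2*Rp := by
    have h1 : (f₂ + f₁*c₂/c₁)*(R ΔB) ≤ (lam/2)*(R ΔB) :=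
      mul_le_mul_of_nonneg_right (by linarith) hRΔ0
    have h2 : (lam/2)*(R ΔB : ℝ) = lam/2*Rm + lam/2*Rp := by rw [hRdec]; ring
    linarith [h1, h2]
  have absorb2 : f₃*(slopeNorm w Δθ) + f₁*c₃/c₁*(slopeNorm w Δθ) ≤ tau/2*hd + tau/2*tl := by
    have h1 : (f₃ + f₁*c₃/c₁)*(slopeNorm w Δθ) ≤ (tau/2)*(slopeNorm w Δθ) :=
      mul_le_mul_of_nonneg_right (by linarith) hSl0
    have h2 : (tau/2)*(slopeNorm w Δθ) = tau/2*hd + tau/2*tl := by rw [hSl]; ring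
    linarith [h1, h2]
  have htauhd : tau * hd ≤ tau * (Ωc * L) := mul_le_mul_of_nonneg_left hheadL htau.le
  have KEY : Q/2 + (lam*Rp + tau*tl)/2 ≤ f₁/c₁*q + (3/2)*(lam*Rm + tau*(Ωc*L)) := by
    linarith [combo, absorb1, absorb2, htauhd]
  by_cases hcone : lam*Rp + tau*tl ≤ 6*(lam*Rm + tau*(Ωc*L))
  · left
    have e1 : (lam / tau) * Rp + tl = (lam*Rp + tau*tl)/tau := by
      field_simp
    have e2 : 6 * ((lam / tau) * Rm + Ωc * L) = (6*(lam*Rm + tau*(Ωc*L)))/tau := by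
      field_simp
    rw [e1, e2]
    exact (div_le_div_iff_of_pos_right htau).mpr hcone
  · right
    push_neg at hcone
    have ha0 : 0 ≤ lam*Rm + tau*(Ωc*L) := by positivity
    have hbb0 : 0 ≤ lam*Rp + tau*tl := by positivity
    have step : Q/2 + (lam*Rp + tau*tl)/4 ≤ f₁/c₁*q := by linarith
    have hstep' : q^2/2 + (lam*Rp + tau*tl)/4 ≤ f₁/c₁*q := by rw [hqsq]; exact step
    have hκ : 0 < f₁/c₁ := div_pos hf₁ hc₁
    obtain ⟨hqle, hbble⟩ := quad_bound hq0 hbb0 hκ hstep'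
    have eq1 : lam*(R ΔB : ℝ) = lam*Rm + lam*Rp := by rw [hRdec]; ring
    have eq2 : tau*(slopeNorm w Δθ) = tau*hd + tau*tl := by rw [hSl]; ring
    have Ttot : lam*(R ΔB : ℝ) + tau*(slopeNorm w Δθ) ≤ 28*f₁^2/(3*c₁^2) := by
      have h7 : lam*(R ΔB : ℝ) + tau*(slopeNorm w Δθ)
          ≤ (lam*Rm + tau*(Ωc*L)) + (lam*Rp + tau*tl) := by linarith
      have h8 : (lam*Rm + tau*(Ωc*L)) + (lam*Rp + tau*tl)
          ≤ (7/6)*(lam*Rp + tau*tl) := by linarith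
      have hx : 0 ≤ f₁^2/c₁^2 := by positivity
      have h9 : (7/6)*(2*(f₁/c₁)^2) ≤ 28*f₁^2/(3*c₁^2) := by
        rw [div_pow]
        have e9 : 28*f₁^2/(3*c₁^2) = (28/3)*(f₁^2/c₁^2) := by ring
        rw [e9]
        linarith
      linarith [mul_le_mul_of_nonneg_left hbble (by norm_num : (0:ℝ) ≤ 7/6)]
    refine ⟨?_, Ttot⟩
    set M := max (c₂ / lam) (c₃ / tau) with hM
    have hM0 : 0 ≤ M := le_trans (div_pos hc₂ hlam).le (le_max_left _ _)
    have hc2M : c₂*(R ΔB : ℝ) ≤ M*(lam*(R ΔB : ℝ)) := by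
      have e : c₂*(R ΔB : ℝ) = (c₂/lam)*(lam*(R ΔB : ℝ)) := by
        field_simp
      rw [e]
      apply mul_le_mul_of_nonneg_right (le_max_left _ _)
      positivity
    have hc3M : c₃*(slopeNorm w Δθ) ≤ M*(tau*(slopeNorm w Δθ)) := by
      have e : c₃*(slopeNorm w Δθ) = (c₃/tau)*(tau*(slopeNorm w Δθ)) := by
        field_simp
      rw [e]
      apply mul_le_mul_of_nonneg_right (le_max_right _ _)
      positivity
    have hMT : M*(lam*(R ΔB : ℝ)) + M*(tau*(slopeNorm w Δθ)) ≤ M*(28*f₁^2/(3*c₁^2)) := by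
      have := mul_le_mul_of_nonneg_left Ttot hM0
      linarith [this]
    have hnum : q + c₂*(R ΔB : ℝ) + c₃*(slopeNorm w Δθ)
        ≤ 2*f₁/c₁ + M*(28*f₁^2/(3*c₁^2)) := by
      have : 2*(f₁/c₁) = 2*f₁/c₁ := by ring
      linarith [hqle, hc2M, hc3M, hMT]
    calc P ≤ (q + c₂ * R ΔB + c₃ * slopeNorm w Δθ) / c₁ := hPle
      _ ≤ (2*f₁/c₁ + M*(28*f₁^2/(3*c₁^2)))/c₁ := by
          exact (div_le_div_iff_of_pos_right hc₁).mpr hnum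
      _ = 2 * f₁ / c₁ ^ 2 + M * (28 * f₁ ^ 2 / (3 * c₁ ^ 3)) := by
          field_simp

end
end

section
/- (First-order inequality for the B-block.) In the deterministic contaminated regression setting with R a decomposable norm, let (B̂,θ̂) be a minimizer of the augmented objective and Δ_B := B̂−B*, Δ_θ := θ̂−θ*. Then ⟨𝔛^{(n)}(Δ_B) + Δ_θ, 𝔛^{(n)}(Δ_B)⟩ ≤ ⟨ξ^{(n)}, 𝔛^{(n)}(Δ_B)⟩ + λ·( 2·R(P_{B*}(Δ_B)) − R(Δ_B) ). -/
open MeasureTheory Real Finset Matrix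

noncomputable section

/-- Passing to the limit `t → 1⁻` in a family of linear inequalities. -/
lemma aux_limit_slope (Q K : ℝ) (hQ : 0 ≤ Q)
    (h : ∀ t : ℝ, 0 ≤ t → t < 1 → (1 + t) * Q ≤ K) : 2 * Q ≤ K := by
  by_contra hc
  push_neg at hc
  have h0 := h 0 le_rfl one_pos
  have hQpos : 0 < Q := by nlinarith
  have hK0 : 0 < K := by nlinarith
  set s := K / (2 * Q) with hs
  have hs1 : s < 1 := by rw [hs, div_lt_one (by positivity)]; linarith
  have hs0 : 0 ≤ s := by positivity
  have h2 := h s hs0 hs1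
  have hK : K = 2 * s * Q := by rw [hs]; field_simp
  nlinarith

lemma fro_add_right {d₁ d₂ : ℕ} (Xi V W : Matrix (Fin d₁) (Fin d₂) ℝ) :
    fro Xi (V + W) = fro Xi V + fro Xi W := by
  simp [fro, Matrix.add_apply, mul_add, Finset.sum_add_distrib]

lemma fro_smul_right {d₁ d₂ : ℕ} (Xi : Matrix (Fin d₁) (Fin d₂) ℝ) (t : ℝ)
    (V : Matrix (Fin d₁) (Fin d₂) ℝ) : fro Xi (t • V) = t * fro Xi V := by
  simp [fro, Matrix.smul_apply, smul_eq_mul, Finset.mul_sum, mul_left_comm]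

/-- **First-order inequality for the B-block** (Lemma
`lemma:recursion:delta:bb:general:norm`): for any minimizer `(B̂,θ̂)` of the augmented
objective, `⟨𝔛ⁿ(Δ_B)+Δ_θ, 𝔛ⁿ(Δ_B)⟩ ≤ ⟨ξⁿ, 𝔛ⁿ(Δ_B)⟩ + λ(2 R(P_{B*}(Δ_B)) − R(Δ_B))`. -/
theorem first_order_inequality_B_block {d₁ d₂ n : ℕ}
    (X : Fin n → Matrix (Fin d₁) (Fin d₂) ℝ) (ξ : Fin n → ℝ)
    (Bstar : Matrix (Fin d₁) (Fin d₂) ℝ) (θstar : Fin n → ℝ)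
    (A : ℝ) (hA : 2 ≤ A) (lam tau : ℝ) (hlam : 0 < lam) (htau : 0 < tau)
    -- R a decomposable norm, with decomposition projections P⊥_B
    (R : Seminorm ℝ (Matrix (Fin d₁) (Fin d₂) ℝ)) (hRdef : ∀ V, R V = 0 → V = 0)
    (Pp : Matrix (Fin d₁) (Fin d₂) ℝ →
      Matrix (Fin d₁) (Fin d₂) ℝ →ₗ[ℝ] Matrix (Fin d₁) (Fin d₂) ℝ)
    (hP0 : ∀ B, Pp B B = 0)
    (hPorth : ∀ B V, fro (V - Pp B V) (Pp B V) = 0)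
    (hPdecomp : ∀ B V, R V = R (V - Pp B V) + R (Pp B V))
    -- data
    (y : Fin n → ℝ)
    (hy : y = fun i => fro (X i) Bstar + Real.sqrt n * θstar i + ξ i)
    -- minimizer of the augmented objective
    (Bhat : Matrix (Fin d₁) (Fin d₂) ℝ) (θhat : Fin n → ℝ)
    (hmin : ∀ (B : Matrix (Fin d₁) (Fin d₂) ℝ) (θ : Fin n → ℝ),
      (1 / (2 * (n : ℝ))) * ∑ i, (y i - fro (X i) Bhat - Real.sqrt n * θhat i) ^ 2
          + lam * R Bhat + tau * slopeNorm (slopeWeights A n) θhat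
        ≤ (1 / (2 * (n : ℝ))) * ∑ i, (y i - fro (X i) B - Real.sqrt n * θ i) ^ 2
          + lam * R B + tau * slopeNorm (slopeWeights A n) θ) :
    ∑ i, (designN X (Bhat - Bstar) i + (θhat i - θstar i)) * designN X (Bhat - Bstar) i
      ≤ ∑ i, (ξ i / Real.sqrt n) * designN X (Bhat - Bstar) i
        + lam * (2 * R ((Bhat - Bstar) - Pp Bstar (Bhat - Bstar)) - R (Bhat - Bstar)) := by
  set Δ := Bhat - Bstar with hΔ
  have hBhat : Bhat = Bstar + Δ := by rw [hΔ]; abel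
  set a : Fin n → ℝ := fun i => fro (X i) Δ with ha
  set c : Fin n → ℝ := fun i => ξ i - Real.sqrt n * (θhat i - θstar i) with hc
  -- residuals
  have hres1 : ∀ i, y i - fro (X i) Bhat - Real.sqrt n * θhat i = c i - a i := by
    intro i
    rw [hy, hBhat, fro_add_right]
    simp only [hc, ha]
    ring
  have hres2 : ∀ (t : ℝ) (i : Fin n),
      y i - fro (X i) (Bstar + t • Δ) - Real.sqrt n * θhat i = c i - t * a i := by
    intro t i
    rw [hy, fro_add_right, fro_smul_right]
    simp only [hc, ha]
    ring
  -- the per-t first-order inequality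
  have key : ∀ t : ℝ, 0 ≤ t → t < 1 →
      (1 + t) * ((∑ i, a i ^ 2) / (2 * (n : ℝ)))
        ≤ (∑ i, c i * a i) / n + lam * (R Bstar - R Bhat) := by
    intro t ht0 ht1
    have hmin' := hmin (Bstar + t • Δ) θhat
    simp only [hres1, hres2] at hmin'
    -- convexity of the seminorm along the segment
    have hconv : R (Bstar + t • Δ) ≤ (1 - t) * R Bstar + t * R Bhat := by
      have heq : Bstar + t • Δ = (1 - t) • Bstar + t • Bhat := by
        rw [hΔ]; module
      rw [heq]
      calc R ((1 - t) • Bstar + t • Bhat)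
          ≤ R ((1 - t) • Bstar) + R (t • Bhat) := map_add_le_add R _ _
        _ = |1 - t| * R Bstar + |t| * R Bhat := by
            rw [map_smul_eq_mul, map_smul_eq_mul]; simp [Real.norm_eq_abs]
        _ = (1 - t) * R Bstar + t * R Bhat := by
            rw [abs_of_nonneg (by linarith), abs_of_nonneg ht0]
    have hsum : ∑ i, (c i - t * a i) ^ 2 - ∑ i, (c i - a i) ^ 2
        = (1 - t) * ∑ i, (2 * c i * a i - (1 + t) * a i ^ 2) := by
      rw [← Finset.sum_sub_distrib, Finset.mul_sum]
      exact Finset.sum_congr rfl fun i _ => by ring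
    have h1t : 0 < 1 - t := by linarith
    have hchain : (1 - t) * (lam * (R Bhat - R Bstar))
        ≤ (1 - t) * ((1 / (2 * (n : ℝ))) * ∑ i, (2 * c i * a i - (1 + t) * a i ^ 2)) := by
      have hR : lam * R (Bstar + t • Δ) ≤ lam * ((1 - t) * R Bstar + t * R Bhat) :=
        mul_le_mul_of_nonneg_left hconv hlam.le
      have hq : lam * R Bhat - lam * R (Bstar + t • Δ)
          ≤ (1 / (2 * (n : ℝ))) * (∑ i, (c i - t * a i) ^ 2 - ∑ i, (c i - a i) ^ 2) := by
        have hn2 : (0:ℝ) ≤ 1 / (2 * (n : ℝ)) := by positivity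
        rw [mul_sub]
        linarith [hmin']
      calc (1 - t) * (lam * (R Bhat - R Bstar))
          = lam * R Bhat - lam * ((1 - t) * R Bstar + t * R Bhat) := by ring
        _ ≤ lam * R Bhat - lam * R (Bstar + t • Δ) := by linarith
        _ ≤ (1 / (2 * (n : ℝ))) * (∑ i, (c i - t * a i) ^ 2 - ∑ i, (c i - a i) ^ 2) := hq
        _ = (1 - t) * ((1 / (2 * (n : ℝ))) * ∑ i, (2 * c i * a i - (1 + t) * a i ^ 2)) := by
            rw [hsum]; ring
    have hdiv := (mul_le_mul_iff_right₀ h1t).mp hchain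
    have hsplit : (1 / (2 * (n : ℝ))) * ∑ i, (2 * c i * a i - (1 + t) * a i ^ 2)
        = (∑ i, c i * a i) / n - (1 + t) * ((∑ i, a i ^ 2) / (2 * (n : ℝ))) := by
      rw [Finset.sum_sub_distrib]
      have h2 : ∑ i, 2 * c i * a i = 2 * ∑ i, c i * a i := by
        rw [Finset.mul_sum]; exact Finset.sum_congr rfl fun i _ => by ring
      have h3 : ∑ i, (1 + t) * a i ^ 2 = (1 + t) * ∑ i, a i ^ 2 := by
        rw [Finset.mul_sum]
      rw [h2, h3]
      rcases eq_or_ne (n : ℝ) 0 with hn | hn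
      · simp [hn]
      · field_simp
    rw [hsplit] at hdiv
    linarith
  -- pass to the limit t → 1⁻
  have hmain : 2 * ((∑ i, a i ^ 2) / (2 * (n : ℝ)))
      ≤ (∑ i, c i * a i) / n + lam * (R Bstar - R Bhat) :=
    aux_limit_slope _ _ (by positivity) key
  have hQn : 2 * ((∑ i, a i ^ 2) / (2 * (n : ℝ))) = (∑ i, a i ^ 2) / n := by
    rcases eq_or_ne (n : ℝ) 0 with hn | hn
    · simp [hn]
    · field_simp
  rw [hQn] at hmain
  -- decomposability bound on  R B* − R B̂
  have hdecomp : R Bstar - R Bhat ≤ 2 * R (Δ - Pp Bstar Δ) - R Δ := by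
    have h1 : Pp Bstar Bhat = Pp Bstar Δ := by
      rw [hBhat, map_add, hP0, zero_add]
    have h2 := hPdecomp Bstar Bhat
    have h3 := hPdecomp Bstar Δ
    have h4 : Bhat - Pp Bstar Bhat = Bstar + (Δ - Pp Bstar Δ) := by
      rw [h1, hBhat]; abel
    rw [h4, h1] at h2
    have h5 : R Bstar ≤ R (Bstar + (Δ - Pp Bstar Δ)) + R (Δ - Pp Bstar Δ) := by
      have h6 : Bstar = (Bstar + (Δ - Pp Bstar Δ)) + (-(Δ - Pp Bstar Δ)) := by abel
      calc R Bstar = R ((Bstar + (Δ - Pp Bstar Δ)) + (-(Δ - Pp Bstar Δ))) := by rw [← h6]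
        _ ≤ R (Bstar + (Δ - Pp Bstar Δ)) + R (-(Δ - Pp Bstar Δ)) := map_add_le_add R _ _
        _ = R (Bstar + (Δ - Pp Bstar Δ)) + R (Δ - Pp Bstar Δ) := by rw [map_neg_eq_map]
    linarith
  -- final assembly
  have hsq : (Real.sqrt n) ^ 2 = (n : ℝ) := Real.sq_sqrt (Nat.cast_nonneg n)
  have hL : ∑ i, (designN X Δ i + (θhat i - θstar i)) * designN X Δ i
      = (∑ i, a i ^ 2) / n
        + (∑ i, Real.sqrt n * (θhat i - θstar i) * a i) / n := by
    rw [Finset.sum_div, Finset.sum_div, ← Finset.sum_add_distrib]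
    refine Finset.sum_congr rfl fun i _ => ?_
    have hn : 0 < n := i.pos
    have hs : 0 < Real.sqrt n := Real.sqrt_pos.mpr (by exact_mod_cast hn)
    simp only [designN]
    rw [← hsq]
    field_simp
    rw [Real.sqrt_sq hs.le]; simp only [ha]
    ring
  have hR1 : ∑ i, (ξ i / Real.sqrt n) * designN X Δ i
      = (∑ i, c i * a i) / n
        + (∑ i, Real.sqrt n * (θhat i - θstar i) * a i) / n := by
    rw [Finset.sum_div, Finset.sum_div, ← Finset.sum_add_distrib]
    refine Finset.sum_congr rfl fun i _ => ?_
    have hn : 0 < n := i.pos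
    have hs : 0 < Real.sqrt n := Real.sqrt_pos.mpr (by exact_mod_cast hn)
    simp only [designN, hc]
    rw [← hsq]
    field_simp
    rw [Real.sqrt_sq hs.le]; simp only [ha]
    ring
  rw [hL, hR1]
  have hlamd : lam * (R Bstar - R Bhat) ≤ lam * (2 * R (Δ - Pp Bstar Δ) - R Δ) :=
    mul_le_mul_of_nonneg_left hdecomp hlam.le
  linarith

end
end
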